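/- arXiv:1810.08144 — 3 statements merged into one kernel-verified Lean document; each statement's English description precedes it below -/
import Mathlib

section
/- Let n, N ≥ 1, let θ ∈ ℝ with θ > -1/2, let H^1,…,H^N be symmetric n×n real matrices and ω^1,…,ω^N ∈ ℝⁿ with ∑_{α=1}^N ‖ω^α‖² = 1. Then θ² ∑_{α=1}^N (∑_{β=1}^N ⟨H^β ω^β, ω^α⟩)² + 2θ ‖∑_{α=1}^N H^α ω^α‖² + ∑_{α=1}^N tr((H^α)²) ≥ min{2θ+1, 1} · ∑_{α=1}^N tr((H^α)²). -/
open Finset Matrix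

theorem stmt1 (n N : ℕ) (hn : 1 ≤ n) (hN : 1 ≤ N) (θ : ℝ) (hθ : -1/2 < θ)
    (H : Fin N → Matrix (Fin n) (Fin n) ℝ) (hH : ∀ α, (H α).IsSymm)
    (ω : Fin N → Fin n → ℝ)
    (hω : ∑ α, ∑ i, (ω α i) ^ 2 = 1) :
    min (2 * θ + 1) 1 * ∑ α, Matrix.trace (H α * H α) ≤
      θ ^ 2 * ∑ α, (∑ β, ∑ i, (H β).mulVec (ω β) i * ω α i) ^ 2
        + 2 * θ * ∑ i, (∑ α, (H α).mulVec (ω α) i) ^ 2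
        + ∑ α, Matrix.trace (H α * H α) := by
  set A : ℝ := ∑ α, (∑ β, ∑ i, (H β).mulVec (ω β) i * ω α i) ^ 2 with hA
  set B : ℝ := ∑ i, (∑ α, (H α).mulVec (ω α) i) ^ 2 with hB
  have hT : ∑ α, Matrix.trace (H α * H α) = ∑ α, ∑ i, ∑ j, (H α i j) ^ 2 := by
    refine Finset.sum_congr rfl fun α _ => ?_
    rw [Matrix.trace, Finset.sum_congr rfl fun i _ => rfl]
    simp only [Matrix.diag, Matrix.mul_apply]
    refine Finset.sum_congr rfl fun i _ => Finset.sum_congr rfl fun j _ => ?_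
    have : H α j i = H α i j := by
      conv_lhs => rw [← (hH α)]
      rfl
    rw [this, sq]
  set T : ℝ := ∑ α, Matrix.trace (H α * H α) with hTdef
  have hA0 : 0 ≤ A := Finset.sum_nonneg fun _ _ => sq_nonneg _
  have hB0 : 0 ≤ B := Finset.sum_nonneg fun _ _ => sq_nonneg _
  have hT0 : 0 ≤ T := by
    rw [hT]
    exact Finset.sum_nonneg fun _ _ => Finset.sum_nonneg fun _ _ =>
      Finset.sum_nonneg fun _ _ => sq_nonneg _
  have hBT : B ≤ T := by
    rw [hB, hT]
    have key : ∀ i : Fin n, (∑ α, (H α).mulVec (ω α) i) ^ 2 ≤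
        ∑ α, ∑ j, (H α i j) ^ 2 := by
      intro i
      have h1 : (∑ α, (H α).mulVec (ω α) i) =
          ∑ p ∈ (Finset.univ ×ˢ Finset.univ : Finset (Fin N × Fin n)),
            (H p.1 i p.2) * (ω p.1 p.2) := by
        rw [Finset.sum_product]
        refine Finset.sum_congr rfl fun α _ => ?_
        simp [Matrix.mulVec, dotProduct]
      have h2 : (∑ α, ∑ j, (H α i j) ^ 2) =
          ∑ p ∈ (Finset.univ ×ˢ Finset.univ : Finset (Fin N × Fin n)),
            (H p.1 i p.2) ^ 2 := by
        rw [Finset.sum_product]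
      have h3 : (1 : ℝ) =
          ∑ p ∈ (Finset.univ ×ˢ Finset.univ : Finset (Fin N × Fin n)),
            (ω p.1 p.2) ^ 2 := by
        rw [Finset.sum_product]; exact hω.symm
      rw [h1, h2]
      calc (∑ p ∈ (Finset.univ ×ˢ Finset.univ : Finset (Fin N × Fin n)),
            (H p.1 i p.2) * (ω p.1 p.2)) ^ 2
          ≤ (∑ p ∈ (Finset.univ ×ˢ Finset.univ : Finset (Fin N × Fin n)),
              (H p.1 i p.2) ^ 2) *
            (∑ p ∈ (Finset.univ ×ˢ Finset.univ : Finset (Fin N × Fin n)),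
              (ω p.1 p.2) ^ 2) := by
            exact Finset.sum_mul_sq_le_sq_mul_sq _ _ _
        _ = ∑ p ∈ (Finset.univ ×ˢ Finset.univ : Finset (Fin N × Fin n)),
              (H p.1 i p.2) ^ 2 := by rw [← h3, mul_one]
    calc ∑ i, (∑ α, (H α).mulVec (ω α) i) ^ 2
        ≤ ∑ i, ∑ α, ∑ j, (H α i j) ^ 2 := Finset.sum_le_sum fun i _ => key i
      _ = ∑ α, ∑ i, ∑ j, (H α i j) ^ 2 := Finset.sum_comm
  rcases le_total θ 0 with hθ0 | hθ0
  · have hmin : min (2 * θ + 1) 1 ≤ 2 * θ + 1 := min_le_left _ _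
    nlinarith [mul_le_mul_of_nonneg_right hmin hT0, sq_nonneg θ,
      mul_nonneg (sq_nonneg θ) hA0, mul_nonneg (neg_nonneg.mpr hθ0) (sub_nonneg.mpr hBT)]
  · have hmin : min (2 * θ + 1) 1 ≤ 1 := min_le_right _ _
    nlinarith [mul_le_mul_of_nonneg_right hmin hT0,
      mul_nonneg (sq_nonneg θ) hA0, mul_nonneg hθ0 hB0]
end

section
/- Let p > 1 and d ≥ 1. There exist positive constants C = C(p) and C' = C'(p) such that for all ξ, η ∈ ℝ^d and all ε ≥ 0: C (|ξ|² + |η|² + ε²)^{(p-2)/2} |ξ − η|² ≤ |b_ε(|ξ|)^{(p-2)/2} ξ − b_ε(|η|)^{(p-2)/2} η|² ≤ C' (b_ε(|ξ|)^{p-2} ξ − b_ε(|η|)^{p-2} η) · (ξ − η), where b_ε(t) = √(t² + ε²). -/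
/-!
Write `V(ξ) = s ξ` and `A(ξ) = s² ξ` with `s = b_ε(|ξ|)^((p-2)/2)`, and `t` likewise for `η`.
Each of the two inequalities is affine in `⟪ξ, η⟫`, which ranges over `[-|ξ||η|, |ξ||η|]`, so it
suffices to check the collinear configurations: scalar inequalities in `x = |ξ| ≥ y = |η| ≥ 0`.
These follow from the mean value theorem for `x ↦ b_ε(x)^r x`, whose derivative
`b_ε(x)^(r-2) ((1+r) x² + ε²)` lies between `min 1 (1+r)` and `max 1 (1+r)` times `b_ε(x)^r`,
together with the monotonicity of `x ↦ b_ε(x)^r` and `b_ε(x)² ≤ x² + y² + ε² ≤ 2 b_ε(x)²`.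
-/

open Real Set
open scoped InnerProductSpace

lemma sq_rpow_div_two {a : ℝ} (ha : 0 ≤ a) (r : ℝ) : (a ^ (r / 2)) ^ 2 = a ^ r := by
  rw [← rpow_mul_natCast ha]
  norm_num

lemma sq_sqrt_rpow {a : ℝ} (ha : 0 ≤ a) (r : ℝ) : (√a ^ r) ^ 2 = a ^ r := by
  rw [← rpow_div_two_eq_sqrt r ha, sq_rpow_div_two ha]

lemma min_one_inv_two_rpow_mul_rpow_le {a K r : ℝ} (ha : 0 ≤ a) (haK : a ≤ K) (hK : K ≤ 2 * a) :
    min 1 (2 ^ r)⁻¹ * K ^ r ≤ a ^ r := by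
  have hK0 : 0 ≤ K ^ r := rpow_nonneg (ha.trans haK) r
  rcases le_total 0 r with hr | hr
  · calc min 1 (2 ^ r)⁻¹ * K ^ r ≤ (2 ^ r)⁻¹ * (2 * a) ^ r :=
          mul_le_mul (min_le_right _ _) (rpow_le_rpow (ha.trans haK) hK hr) hK0 (by positivity)
      _ = a ^ r := by rw [mul_rpow zero_le_two ha]; field_simp
  · rcases ha.eq_or_lt with rfl | ha
    · obtain rfl : K = 0 := by linarith
      exact mul_le_of_le_one_left hK0 (min_le_left _ _)
    calc min 1 (2 ^ r)⁻¹ * K ^ r ≤ 1 * a ^ r :=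
          mul_le_mul (min_le_left _ _) (rpow_le_rpow_of_nonpos ha haK hr) hK0 zero_le_one
      _ = a ^ r := one_mul _

noncomputable def regPow (r ε x : ℝ) : ℝ := √(x ^ 2 + ε ^ 2) ^ r * x

section RegPow

variable {r ε x y : ℝ}

lemma regPow_eq_rpow (r ε x : ℝ) : regPow r ε x = (x ^ 2 + ε ^ 2) ^ (r / 2) * x := by
  rw [regPow, rpow_div_two_eq_sqrt r (by positivity)]

lemma hasDerivAt_regPow (h : 0 < x ^ 2 + ε ^ 2) :
    HasDerivAt (regPow r ε) (√(x ^ 2 + ε ^ 2) ^ (r - 2) * ((1 + r) * x ^ 2 + ε ^ 2)) x := by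
  have hsq : HasDerivAt (fun x : ℝ => x ^ 2 + ε ^ 2) (2 * x) x := by
    simpa using (hasDerivAt_pow 2 x).add_const (ε ^ 2)
  have := (hsq.rpow_const (p := r / 2) (Or.inl h.ne')).mul (hasDerivAt_id' x)
  rw [show regPow r ε = fun x => (x ^ 2 + ε ^ 2) ^ (r / 2) * x from funext (regPow_eq_rpow r ε)]
  refine this.congr_deriv ?_
  rw [← rpow_div_two_eq_sqrt _ h.le, show (r - 2) / 2 = r / 2 - 1 by ring,
    rpow_sub_one h.ne' (r / 2)]
  field_simp
  ring

lemma exists_regPow_sub_eq (hy : 0 < y) (hyx : y < x) :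
    ∃ c ∈ Ioo y x, regPow r ε x - regPow r ε y =
      √(c ^ 2 + ε ^ 2) ^ (r - 2) * ((1 + r) * c ^ 2 + ε ^ 2) * (x - y) := by
  have hpos : ∀ c ∈ Icc y x, 0 < c ^ 2 + ε ^ 2 := fun c hc => by
    have : 0 < c := hy.trans_le hc.1
    positivity
  obtain ⟨c, hc, hslope⟩ := exists_hasDerivAt_eq_slope (regPow r ε) _ hyx
    (fun c hc => (hasDerivAt_regPow (hpos c hc)).continuousAt.continuousWithinAt)
    (fun c hc => hasDerivAt_regPow (hpos c (Ioo_subset_Icc_self hc)))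
  exact ⟨c, hc, by rw [hslope, div_mul_cancel₀ _ (sub_ne_zero.2 hyx.ne')]⟩

lemma sqrt_rpow_sub_two_mul {B : ℝ} (hB : 0 < B) (r : ℝ) : √B ^ (r - 2) * B = √B ^ r := by
  rw [rpow_sub (sqrt_pos.2 hB), rpow_two, sq_sqrt hB.le]
  field_simp

lemma le_regPow_sub_of_nonneg (hr : 0 ≤ r) (hy : 0 ≤ y) (hyx : y ≤ x) :
    √(x ^ 2 + ε ^ 2) ^ r * (x - y) ≤ regPow r ε x - regPow r ε y := by
  have : √(y ^ 2 + ε ^ 2) ^ r ≤ √(x ^ 2 + ε ^ 2) ^ r := by gcongr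
  unfold regPow
  nlinarith

lemma regPow_sub_le_of_nonpos (hr : r ≤ 0) (hy : 0 ≤ y) (hyx : y ≤ x) :
    regPow r ε x - regPow r ε y ≤ √(x ^ 2 + ε ^ 2) ^ r * (x - y) := by
  rcases hy.eq_or_lt with rfl | hy
  · simp [regPow]
  have : √(x ^ 2 + ε ^ 2) ^ r ≤ √(y ^ 2 + ε ^ 2) ^ r :=
    rpow_le_rpow_of_nonpos (by positivity) (by gcongr) hr
  unfold regPow
  nlinarith

lemma regPow_sub_le_of_nonneg (hr : 0 ≤ r) (hy : 0 ≤ y) (hyx : y ≤ x) :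
    regPow r ε x - regPow r ε y ≤ (1 + r) * √(x ^ 2 + ε ^ 2) ^ r * (x - y) := by
  rcases hy.eq_or_lt with rfl | hy
  · have : 0 ≤ √(x ^ 2 + ε ^ 2) ^ r * x := by positivity
    simp only [regPow]
    nlinarith
  rcases hyx.eq_or_lt with rfl | hyx
  · simp
  obtain ⟨c, hc, hΔ⟩ := exists_regPow_sub_eq (r := r) (ε := ε) hy hyx
  have hc0 : 0 < c := hy.trans hc.1
  have hB : 0 < c ^ 2 + ε ^ 2 := by positivity
  have hderiv : √(c ^ 2 + ε ^ 2) ^ (r - 2) * ((1 + r) * c ^ 2 + ε ^ 2) ≤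
      (1 + r) * √(c ^ 2 + ε ^ 2) ^ r := by
    rw [← sqrt_rpow_sub_two_mul hB r]
    have : 0 ≤ √(c ^ 2 + ε ^ 2) ^ (r - 2) := by positivity
    linarith [mul_nonneg this (mul_nonneg hr (sq_nonneg ε))]
  have hmono : √(c ^ 2 + ε ^ 2) ^ r ≤ √(x ^ 2 + ε ^ 2) ^ r :=
    rpow_le_rpow (sqrt_nonneg _) (sqrt_le_sqrt (by nlinarith [hc.2])) hr
  rw [hΔ]
  exact mul_le_mul_of_nonneg_right (hderiv.trans (by gcongr)) (sub_nonneg.2 hyx.le)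

lemma le_regPow_sub_of_nonpos (hr : -1 ≤ r) (hr0 : r ≤ 0) (hy : 0 ≤ y) (hyx : y ≤ x) :
    (1 + r) * √(x ^ 2 + ε ^ 2) ^ r * (x - y) ≤ regPow r ε x - regPow r ε y := by
  rcases hy.eq_or_lt with rfl | hy
  · have : 0 ≤ √(x ^ 2 + ε ^ 2) ^ r * x := by positivity
    simp only [regPow]
    nlinarith
  rcases hyx.eq_or_lt with rfl | hyx
  · simp
  obtain ⟨c, hc, hΔ⟩ := exists_regPow_sub_eq (r := r) (ε := ε) hy hyx
  have hc0 : 0 < c := hy.trans hc.1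
  have hB : 0 < c ^ 2 + ε ^ 2 := by positivity
  have hderiv : (1 + r) * √(c ^ 2 + ε ^ 2) ^ r ≤
      √(c ^ 2 + ε ^ 2) ^ (r - 2) * ((1 + r) * c ^ 2 + ε ^ 2) := by
    rw [← sqrt_rpow_sub_two_mul hB r]
    have : 0 ≤ √(c ^ 2 + ε ^ 2) ^ (r - 2) := by positivity
    linarith [mul_nonneg this (mul_nonneg (neg_nonneg.2 hr0) (sq_nonneg ε))]
  have hmono : √(x ^ 2 + ε ^ 2) ^ r ≤ √(c ^ 2 + ε ^ 2) ^ r :=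
    rpow_le_rpow_of_nonpos (sqrt_pos.2 hB) (sqrt_le_sqrt (by nlinarith [hc.2])) hr0
  rw [hΔ]
  refine mul_le_mul_of_nonneg_right (le_trans ?_ hderiv) (sub_nonneg.2 hyx.le)
  exact mul_le_mul_of_nonneg_left hmono (by linarith)

lemma regPow_sub_bounds (hr : -1 ≤ r) (hy : 0 ≤ y) (hyx : y ≤ x) :
    min 1 (1 + r) * √(x ^ 2 + ε ^ 2) ^ r * (x - y) ≤ regPow r ε x - regPow r ε y ∧
      regPow r ε x - regPow r ε y ≤ max 1 (1 + r) * √(x ^ 2 + ε ^ 2) ^ r * (x - y) := by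
  rcases le_total 0 r with hr0 | hr0
  · rw [min_eq_left (by linarith), max_eq_right (by linarith)]
    exact ⟨by simpa using le_regPow_sub_of_nonneg hr0 hy hyx, regPow_sub_le_of_nonneg hr0 hy hyx⟩
  · rw [min_eq_right (by linarith), max_eq_left (by linarith)]
    exact ⟨le_regPow_sub_of_nonpos hr hr0 hy hyx, by simpa using regPow_sub_le_of_nonpos hr0 hy hyx⟩

lemma min_one_inv_two_rpow_mul_le_sq_sqrt_rpow (hy : 0 ≤ y) (hyx : y ≤ x) :
    min 1 (2 ^ r)⁻¹ * (x ^ 2 + y ^ 2 + ε ^ 2) ^ r ≤ (√(x ^ 2 + ε ^ 2) ^ r) ^ 2 := by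
  rw [sq_sqrt_rpow (by positivity)]
  exact min_one_inv_two_rpow_mul_rpow_le (by positivity) (by nlinarith) (by nlinarith)

end RegPow

section Scalar

variable {p ε x y : ℝ}

lemma mul_sq_sub_le_sq_regPow_sub (hp : 0 ≤ p) (hy : 0 ≤ y) (hyx : y ≤ x) :
    min 1 (2 ^ ((p - 2) / 2))⁻¹ * min 1 (p / 2) ^ 2 / 4 *
        (x ^ 2 + y ^ 2 + ε ^ 2) ^ ((p - 2) / 2) * (x - y) ^ 2 ≤
      (regPow ((p - 2) / 2) ε x - regPow ((p - 2) / 2) ε y) ^ 2 := by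
  set S := √(x ^ 2 + ε ^ 2) ^ ((p - 2) / 2)
  have hmin : 0 ≤ min 1 (p / 2) := le_min zero_le_one (by linarith)
  have hΔ : min 1 (p / 2) * S * (x - y) ≤ regPow ((p - 2) / 2) ε x - regPow ((p - 2) / 2) ε y := by
    simpa only [show 1 + (p - 2) / 2 = p / 2 by ring] using
      (regPow_sub_bounds (r := (p - 2) / 2) (ε := ε) (by linarith) hy hyx).1
  have hκ := min_one_inv_two_rpow_mul_le_sq_sqrt_rpow (r := (p - 2) / 2) (ε := ε) hy hyx
  have hsq := pow_le_pow_left₀ (mul_nonneg (mul_nonneg hmin (by positivity)) (sub_nonneg.2 hyx)) hΔ 2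
  calc _ ≤ min 1 (p / 2) ^ 2 * (min 1 (2 ^ ((p - 2) / 2))⁻¹ * (x ^ 2 + y ^ 2 + ε ^ 2) ^ ((p - 2) / 2)) *
        (x - y) ^ 2 := by
          have : 0 ≤ min 1 (p / 2) ^ 2 * (min 1 (2 ^ ((p - 2) / 2))⁻¹ *
            (x ^ 2 + y ^ 2 + ε ^ 2) ^ ((p - 2) / 2)) * (x - y) ^ 2 := by positivity
          linarith
    _ ≤ min 1 (p / 2) ^ 2 * S ^ 2 * (x - y) ^ 2 := by gcongr
    _ = (min 1 (p / 2) * S * (x - y)) ^ 2 := by ring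
    _ ≤ _ := hsq

lemma mul_sq_add_le_sq_regPow_add (hp : 0 ≤ p) (hy : 0 ≤ y) (hyx : y ≤ x) :
    min 1 (2 ^ ((p - 2) / 2))⁻¹ * min 1 (p / 2) ^ 2 / 4 *
        (x ^ 2 + y ^ 2 + ε ^ 2) ^ ((p - 2) / 2) * (x + y) ^ 2 ≤
      (regPow ((p - 2) / 2) ε x + regPow ((p - 2) / 2) ε y) ^ 2 := by
  set S := √(x ^ 2 + ε ^ 2) ^ ((p - 2) / 2)
  have hmin : min 1 (p / 2) ^ 2 ≤ 1 :=
    pow_le_one₀ (le_min zero_le_one (by linarith)) (min_le_left _ _)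
  have hκ := min_one_inv_two_rpow_mul_le_sq_sqrt_rpow (r := (p - 2) / 2) (ε := ε) hy hyx
  have hsum : S * x ≤ regPow ((p - 2) / 2) ε x + regPow ((p - 2) / 2) ε y := by
    have : 0 ≤ √(y ^ 2 + ε ^ 2) ^ ((p - 2) / 2) * y := by positivity
    unfold regPow
    linarith
  have hsq := pow_le_pow_left₀ (mul_nonneg (by positivity) (hy.trans hyx)) hsum 2
  have hxy : min 1 (p / 2) ^ 2 * (x + y) ^ 2 / 4 ≤ x ^ 2 := by
    nlinarith [mul_le_mul hmin (show (x + y) ^ 2 ≤ 4 * x ^ 2 by nlinarith) (sq_nonneg _) zero_le_one]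
  calc _ = min 1 (2 ^ ((p - 2) / 2))⁻¹ * (x ^ 2 + y ^ 2 + ε ^ 2) ^ ((p - 2) / 2) *
        (min 1 (p / 2) ^ 2 * (x + y) ^ 2 / 4) := by ring
    _ ≤ min 1 (2 ^ ((p - 2) / 2))⁻¹ * (x ^ 2 + y ^ 2 + ε ^ 2) ^ ((p - 2) / 2) * x ^ 2 := by gcongr
    _ ≤ S ^ 2 * x ^ 2 := by gcongr
    _ = (S * x) ^ 2 := by ring
    _ ≤ _ := hsq

lemma sq_regPow_sub_le_mul (hp : 1 < p) (hy : 0 ≤ y) (hyx : y ≤ x) :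
    (regPow ((p - 2) / 2) ε x - regPow ((p - 2) / 2) ε y) ^ 2 ≤
      max 1 (p / 2) ^ 2 / min 1 (p - 1) *
        ((x - y) * (regPow (p - 2) ε x - regPow (p - 2) ε y)) := by
  set S := √(x ^ 2 + ε ^ 2) ^ ((p - 2) / 2)
  have hS : S ^ 2 = √(x ^ 2 + ε ^ 2) ^ (p - 2) := sq_rpow_div_two (sqrt_nonneg _) _
  obtain ⟨hlow, hupp⟩ := regPow_sub_bounds (r := (p - 2) / 2) (ε := ε) (by linarith) hy hyx
  rw [show 1 + (p - 2) / 2 = p / 2 by ring] at hlow hupp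
  have hA := (regPow_sub_bounds (r := p - 2) (ε := ε) (by linarith) hy hyx).1
  rw [show 1 + (p - 2) = p - 1 by ring, ← hS] at hA
  have hμ : 0 < min 1 (p - 1) := lt_min one_pos (by linarith)
  have h0 : 0 ≤ min 1 (p / 2) * S * (x - y) :=
    mul_nonneg (mul_nonneg (le_min zero_le_one (by linarith)) (by positivity)) (sub_nonneg.2 hyx)
  calc _ ≤ (max 1 (p / 2) * S * (x - y)) ^ 2 := pow_le_pow_left₀ (h0.trans hlow) hupp 2
    _ = max 1 (p / 2) ^ 2 / min 1 (p - 1) * ((x - y) * (min 1 (p - 1) * S ^ 2 * (x - y))) := by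
        field_simp
    _ ≤ _ := by gcongr

end Scalar

lemma add_mul_nonneg_of_abs_le {A B u v : ℝ} (hu : |u| ≤ v) (h₁ : 0 ≤ A + B * v)
    (h₂ : 0 ≤ A - B * v) : 0 ≤ A + B * u := by
  obtain ⟨hu₁, hu₂⟩ := abs_le.1 hu
  rcases le_total 0 B with hB | hB
  · nlinarith
  · nlinarith

section Inner

variable {E : Type*} [NormedAddCommGroup E] [InnerProductSpace ℝ E]

lemma norm_smul_sub_smul_sq (s t : ℝ) (ξ η : E) :
    ‖s • ξ - t • η‖ ^ 2 = s ^ 2 * ‖ξ‖ ^ 2 + t ^ 2 * ‖η‖ ^ 2 - 2 * (s * t) * ⟪ξ, η⟫_ℝ := by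
  rw [norm_sub_sq_real, norm_smul, norm_smul, real_inner_smul_left, real_inner_smul_right,
    mul_pow, mul_pow, Real.norm_eq_abs, Real.norm_eq_abs, sq_abs, sq_abs]
  ring

lemma inner_smul_sub_smul_sub (s t : ℝ) (ξ η : E) :
    ⟪s • ξ - t • η, ξ - η⟫_ℝ = s * ‖ξ‖ ^ 2 + t * ‖η‖ ^ 2 - (s + t) * ⟪ξ, η⟫_ℝ := by
  rw [inner_sub_left, inner_sub_right, inner_sub_right, real_inner_smul_left,
    real_inner_smul_left, real_inner_smul_left, real_inner_smul_left,
    real_inner_self_eq_norm_sq, real_inner_self_eq_norm_sq, real_inner_comm η ξ]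
  ring

lemma mul_norm_sub_sq_le_norm_smul_sub_smul_sq {C s t : ℝ} {ξ η : E}
    (h₁ : C * (‖ξ‖ - ‖η‖) ^ 2 ≤ (s * ‖ξ‖ - t * ‖η‖) ^ 2)
    (h₂ : C * (‖ξ‖ + ‖η‖) ^ 2 ≤ (s * ‖ξ‖ + t * ‖η‖) ^ 2) :
    C * ‖ξ - η‖ ^ 2 ≤ ‖s • ξ - t • η‖ ^ 2 := by
  have := add_mul_nonneg_of_abs_le (abs_real_inner_le_norm ξ η)
    (A := s ^ 2 * ‖ξ‖ ^ 2 + t ^ 2 * ‖η‖ ^ 2 - C * (‖ξ‖ ^ 2 + ‖η‖ ^ 2)) (B := 2 * C - 2 * (s * t))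
    (by linarith) (by linarith)
  rw [norm_sub_sq_real, norm_smul_sub_smul_sq]
  linarith

lemma norm_smul_sub_smul_sq_le_mul_inner {C s t : ℝ} {ξ η : E} (hC : 1 ≤ C)
    (h : (s * ‖ξ‖ - t * ‖η‖) ^ 2 ≤ C * ((‖ξ‖ - ‖η‖) * (s ^ 2 * ‖ξ‖ - t ^ 2 * ‖η‖))) :
    ‖s • ξ - t • η‖ ^ 2 ≤ C * ⟪s ^ 2 • ξ - t ^ 2 • η, ξ - η⟫_ℝ := by
  -- `(x + y) (s² x + t² y) - (s x + t y)² = x y (s - t)²`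
  have hCS : (s * ‖ξ‖ + t * ‖η‖) ^ 2 ≤ C * ((‖ξ‖ + ‖η‖) * (s ^ 2 * ‖ξ‖ + t ^ 2 * ‖η‖)) := by
    have : 0 ≤ (‖ξ‖ + ‖η‖) * (s ^ 2 * ‖ξ‖ + t ^ 2 * ‖η‖) := by positivity
    nlinarith [mul_nonneg (mul_nonneg (norm_nonneg ξ) (norm_nonneg η)) (sq_nonneg (s - t))]
  have := add_mul_nonneg_of_abs_le (abs_real_inner_le_norm ξ η)
    (A := (C - 1) * (s ^ 2 * ‖ξ‖ ^ 2 + t ^ 2 * ‖η‖ ^ 2)) (B := 2 * (s * t) - C * (s ^ 2 + t ^ 2))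
    (by linarith) (by linarith)
  rw [norm_smul_sub_smul_sq, inner_smul_sub_smul_sub]
  linarith

noncomputable def regPowVec (r ε : ℝ) (ξ : E) : E := √(‖ξ‖ ^ 2 + ε ^ 2) ^ r • ξ

variable {p : ℝ}

theorem mul_norm_sub_sq_le_norm_regPowVec_sub_sq (hp : 0 ≤ p) (ε : ℝ) (ξ η : E) :
    min 1 (2 ^ ((p - 2) / 2))⁻¹ * min 1 (p / 2) ^ 2 / 4 *
        (‖ξ‖ ^ 2 + ‖η‖ ^ 2 + ε ^ 2) ^ ((p - 2) / 2) * ‖ξ - η‖ ^ 2 ≤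
      ‖regPowVec ((p - 2) / 2) ε ξ - regPowVec ((p - 2) / 2) ε η‖ ^ 2 := by
  wlog h : ‖η‖ ≤ ‖ξ‖ generalizing ξ η
  · have := this η ξ (le_of_not_ge h)
    rwa [add_comm (‖η‖ ^ 2), norm_sub_rev η, norm_sub_rev (regPowVec _ ε η)] at this
  exact mul_norm_sub_sq_le_norm_smul_sub_smul_sq
    (mul_sq_sub_le_sq_regPow_sub hp (norm_nonneg η) h) (mul_sq_add_le_sq_regPow_add hp (norm_nonneg η) h)

theorem norm_regPowVec_sub_sq_le_mul_inner (hp : 1 < p) (ε : ℝ) (ξ η : E) :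
    ‖regPowVec ((p - 2) / 2) ε ξ - regPowVec ((p - 2) / 2) ε η‖ ^ 2 ≤
      max 1 (p / 2) ^ 2 / min 1 (p - 1) *
        ⟪regPowVec (p - 2) ε ξ - regPowVec (p - 2) ε η, ξ - η⟫_ℝ := by
  wlog h : ‖η‖ ≤ ‖ξ‖ generalizing ξ η
  · have := this η ξ (le_of_not_ge h)
    rwa [norm_sub_rev, ← inner_neg_neg, neg_sub, neg_sub] at this
  have hsq (v : E) : √(‖v‖ ^ 2 + ε ^ 2) ^ (p - 2) = (√(‖v‖ ^ 2 + ε ^ 2) ^ ((p - 2) / 2)) ^ 2 :=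
    (sq_rpow_div_two (sqrt_nonneg _) _).symm
  have hC : 1 ≤ max 1 (p / 2) ^ 2 / min 1 (p - 1) :=
    (one_le_div (lt_min one_pos (by linarith))).2
      ((min_le_left _ _).trans (one_le_pow₀ (le_max_left _ _)))
  simp only [regPowVec, hsq]
  refine norm_smul_sub_smul_sq_le_mul_inner hC ?_
  simpa only [regPow, hsq] using sq_regPow_sub_le_mul (ε := ε) hp (norm_nonneg η) h

end Inner

theorem stmt6_general (p : ℝ) (hp : 1 < p) (d : ℕ) :
    ∃ C C' : ℝ, 0 < C ∧ 0 < C' ∧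
      ∀ (ξ η : EuclideanSpace ℝ (Fin d)) (ε : ℝ), 0 ≤ ε →
        C * (‖ξ‖ ^ 2 + ‖η‖ ^ 2 + ε ^ 2) ^ ((p - 2) / 2) * ‖ξ - η‖ ^ 2 ≤
          ‖(Real.sqrt (‖ξ‖ ^ 2 + ε ^ 2)) ^ ((p - 2) / 2) • ξ -
            (Real.sqrt (‖η‖ ^ 2 + ε ^ 2)) ^ ((p - 2) / 2) • η‖ ^ 2 ∧
        ‖(Real.sqrt (‖ξ‖ ^ 2 + ε ^ 2)) ^ ((p - 2) / 2) • ξ -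
            (Real.sqrt (‖η‖ ^ 2 + ε ^ 2)) ^ ((p - 2) / 2) • η‖ ^ 2 ≤
          C' * (inner ℝ ((Real.sqrt (‖ξ‖ ^ 2 + ε ^ 2)) ^ (p - 2) • ξ -
            (Real.sqrt (‖η‖ ^ 2 + ε ^ 2)) ^ (p - 2) • η) (ξ - η) : ℝ) := by
  refine ⟨_, _, ?_, ?_, fun ξ η ε _ => ⟨mul_norm_sub_sq_le_norm_regPowVec_sub_sq (by linarith) ε ξ η,
    norm_regPowVec_sub_sq_le_mul_inner hp ε ξ η⟩⟩
  · have : 0 < min 1 (p / 2) := lt_min one_pos (by linarith)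
    positivity
  · exact div_pos (by positivity) (lt_min one_pos (by linarith))

theorem stmt6 (p : ℝ) (hp : 1 < p) (d : ℕ) (hd : 1 ≤ d) :
    ∃ C C' : ℝ, 0 < C ∧ 0 < C' ∧
      ∀ (ξ η : EuclideanSpace ℝ (Fin d)) (ε : ℝ), 0 ≤ ε →
        C * (‖ξ‖ ^ 2 + ‖η‖ ^ 2 + ε ^ 2) ^ ((p - 2) / 2) * ‖ξ - η‖ ^ 2 ≤
          ‖(Real.sqrt (‖ξ‖ ^ 2 + ε ^ 2)) ^ ((p - 2) / 2) • ξ -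
            (Real.sqrt (‖η‖ ^ 2 + ε ^ 2)) ^ ((p - 2) / 2) • η‖ ^ 2 ∧
        ‖(Real.sqrt (‖ξ‖ ^ 2 + ε ^ 2)) ^ ((p - 2) / 2) • ξ -
            (Real.sqrt (‖η‖ ^ 2 + ε ^ 2)) ^ ((p - 2) / 2) • η‖ ^ 2 ≤
          C' * (inner ℝ ((Real.sqrt (‖ξ‖ ^ 2 + ε ^ 2)) ^ (p - 2) • ξ -
            (Real.sqrt (‖η‖ ^ 2 + ε ^ 2)) ^ (p - 2) • η) (ξ - η) : ℝ) :=
  stmt6_general p hp d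
end

section
/- Let σ be a radially symmetric mollifier on ℝ^{n−1} and let v ∈ C_0^{0,1}(ℝⁿ) be Lipschitz with compact support. Define w = √(M̃(v²)), where M̃ denotes convolution with σ in the first n−1 variables. Then w is Lipschitz continuous and |∇w| ≤ C √(M̃(|∇_{x'} v|²) + M̃((v_{x_n})²)) almost everywhere, for an absolute constant C. -/
open Real Set MeasureTheory

/-- Convolution with `σ` in the first `n-1` variables:
`M̃(h)(x', x_n) = ∫_{ℝ^{n-1}} h(y', x_n) σ(x' - y') dy'`. -/
noncomputable def Mtilde {m : ℕ} (σ : EuclideanSpace ℝ (Fin m) → ℝ)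
    (h : EuclideanSpace ℝ (Fin m) × ℝ → ℝ) (x : EuclideanSpace ℝ (Fin m) × ℝ) : ℝ :=
  ∫ y : EuclideanSpace ℝ (Fin m), h (y, x.2) * σ (x.1 - y)

/-- `|∇_{x'} f|²`, the squared gradient in the first `n-1` variables. -/
noncomputable def tangGradSq {m : ℕ} (f : EuclideanSpace ℝ (Fin m) × ℝ → ℝ)
    (x : EuclideanSpace ℝ (Fin m) × ℝ) : ℝ :=
  ∑ i, (fderiv ℝ f x (EuclideanSpace.single i 1, (0 : ℝ))) ^ 2

/-- `(f_{x_n})²`, the squared derivative in the last variable. -/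
noncomputable def vertDerivSq {m : ℕ} (f : EuclideanSpace ℝ (Fin m) × ℝ → ℝ)
    (x : EuclideanSpace ℝ (Fin m) × ℝ) : ℝ :=
  (fderiv ℝ f x ((0 : EuclideanSpace ℝ (Fin m)), (1 : ℝ))) ^ 2

open Filter Topology

lemma integrable_mul_of_sq {α : Type*} [MeasurableSpace α] {μ : Measure α} {f g : α → ℝ}
    (hfm : AEStronglyMeasurable f μ) (hgm : AEStronglyMeasurable g μ)
    (hf : Integrable (fun a => f a ^ 2) μ) (hg : Integrable (fun a => g a ^ 2) μ) :
    Integrable (fun a => f a * g a) μ := by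
  refine Integrable.mono' (hf.add hg) (hfm.mul hgm) ?_
  filter_upwards with a
  simp only [Pi.add_apply, Real.norm_eq_abs, abs_mul]
  nlinarith [sq_nonneg (|f a| - |g a|), sq_abs (f a), sq_abs (g a), abs_nonneg (f a), abs_nonneg (g a)]

lemma cs_integral {α : Type*} [MeasurableSpace α] {μ : Measure α} {f g : α → ℝ}
    (hfm : AEStronglyMeasurable f μ) (hgm : AEStronglyMeasurable g μ)
    (hf : Integrable (fun a => f a ^ 2) μ) (hg : Integrable (fun a => g a ^ 2) μ) :
    ∫ a, f a * g a ∂μ ≤ Real.sqrt (∫ a, f a ^ 2 ∂μ) * Real.sqrt (∫ a, g a ^ 2 ∂μ) := by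
  have h2 : (2:ℝ).HolderConjugate 2 := Real.HolderConjugate.two_two
  have hF : MemLp f (ENNReal.ofReal 2) μ := by
    rw [show ENNReal.ofReal 2 = 2 by norm_num]
    exact (memLp_two_iff_integrable_sq hfm).2 hf
  have hG : MemLp g (ENNReal.ofReal 2) μ := by
    rw [show ENNReal.ofReal 2 = 2 by norm_num]
    exact (memLp_two_iff_integrable_sq hgm).2 hg
  have key := MeasureTheory.integral_mul_norm_le_Lp_mul_Lq h2 hF hG
  have e1 : ∀ (h : α → ℝ), (fun a => ‖h a‖ ^ (2:ℝ)) = fun a => h a ^ 2 := by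
    intro h; funext a
    rw [show (2:ℝ) = ((2:ℕ):ℝ) by norm_num, Real.rpow_natCast]
    simp [sq_abs, Real.norm_eq_abs]
  rw [e1 f, e1 g] at key
  have e2 : ∀ (h : α → ℝ), (∫ a, h a ^ 2 ∂μ) ^ (1/(2:ℝ)) = Real.sqrt (∫ a, h a ^ 2 ∂μ) := by
    intro h; rw [Real.sqrt_eq_rpow]
  rw [e2 f, e2 g] at key
  refine le_trans ?_ key
  have habs : Integrable (fun a => ‖f a‖ * ‖g a‖) μ := by
    refine integrable_mul_of_sq hfm.norm hgm.norm ?_ ?_ <;>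
      simp only [Real.norm_eq_abs, sq_abs] <;> assumption
  refine integral_mono (integrable_mul_of_sq hfm hgm hf hg) habs ?_
  intro a
  calc f a * g a ≤ |f a * g a| := le_abs_self _
    _ = ‖f a‖ * ‖g a‖ := by simp [abs_mul]

lemma L2_triangle {α : Type*} [MeasurableSpace α] {μ : Measure α} {F G : α → ℝ}
    (hFm : AEStronglyMeasurable F μ) (hGm : AEStronglyMeasurable G μ)
    (hF : Integrable (fun a => F a ^ 2) μ) (hG : Integrable (fun a => G a ^ 2) μ) :
    Real.sqrt (∫ a, F a ^ 2 ∂μ) ≤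
      Real.sqrt (∫ a, (F a - G a) ^ 2 ∂μ) + Real.sqrt (∫ a, G a ^ 2 ∂μ) := by
  set D : α → ℝ := fun a => F a - G a with hD
  have hDm : AEStronglyMeasurable D μ := hFm.sub hGm
  have hD2 : Integrable (fun a => D a ^ 2) μ := by
    refine Integrable.mono' ((hF.const_mul 2).add (hG.const_mul 2)) (hDm.mul hDm |>.congr ?_) ?_
    · filter_upwards with a; simp [hD, sq]
    · filter_upwards with a
      simp only [Pi.add_apply, Real.norm_eq_abs, hD]
      rw [abs_of_nonneg (sq_nonneg _)]
      nlinarith [sq_nonneg (F a + G a)]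
  set A := Real.sqrt (∫ a, D a ^ 2 ∂μ) with hA
  set B := Real.sqrt (∫ a, G a ^ 2 ∂μ) with hB
  have hDnn : 0 ≤ ∫ a, D a ^ 2 ∂μ := integral_nonneg fun a => sq_nonneg _
  have hGnn : 0 ≤ ∫ a, G a ^ 2 ∂μ := integral_nonneg fun a => sq_nonneg _
  have hAB : 0 ≤ A + B := by positivity
  have expand : (fun a => F a ^ 2) = fun a => D a ^ 2 + 2 * (D a * G a) + G a ^ 2 := by
    funext a; simp only [hD]; ring
  have hDG : Integrable (fun a => D a * G a) μ := integrable_mul_of_sq hDm hGm hD2 hG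
  have hint : ∫ a, F a ^ 2 ∂μ = ∫ a, D a ^ 2 ∂μ + 2 * ∫ a, D a * G a ∂μ + ∫ a, G a ^ 2 ∂μ := by
    rw [expand]
    have h1 : Integrable (fun a => D a ^ 2 + 2 * (D a * G a)) μ := hD2.add (hDG.const_mul 2)
    rw [integral_add h1 hG, integral_add hD2 (hDG.const_mul 2), MeasureTheory.integral_const_mul]
  have hcs := cs_integral hDm hGm hD2 hG
  have : ∫ a, F a ^ 2 ∂μ ≤ (A + B) ^ 2 := by
    rw [hint]
    have hA2 : ∫ a, D a ^ 2 ∂μ = A ^ 2 := (Real.sq_sqrt hDnn).symm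
    have hB2 : ∫ a, G a ^ 2 ∂μ = B ^ 2 := (Real.sq_sqrt hGnn).symm
    nlinarith [hcs]
  calc Real.sqrt (∫ a, F a ^ 2 ∂μ) ≤ Real.sqrt ((A + B) ^ 2) := Real.sqrt_le_sqrt this
    _ = A + B := by rw [Real.sqrt_sq hAB]

lemma weighted_minkowski {α : Type*} [MeasurableSpace α] {μ : Measure α} {σ f g : α → ℝ}
    (hσ0 : ∀ a, 0 ≤ σ a) (hσm : AEStronglyMeasurable σ μ)
    (hfm : AEStronglyMeasurable f μ) (hgm : AEStronglyMeasurable g μ)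
    (hf : Integrable (fun a => f a ^ 2 * σ a) μ) (hg : Integrable (fun a => g a ^ 2 * σ a) μ) :
    Real.sqrt (∫ a, f a ^ 2 * σ a ∂μ) ≤
      Real.sqrt (∫ a, (f a - g a) ^ 2 * σ a ∂μ) + Real.sqrt (∫ a, g a ^ 2 * σ a ∂μ) := by
  set F : α → ℝ := fun a => f a * Real.sqrt (σ a) with hFdef
  set G : α → ℝ := fun a => g a * Real.sqrt (σ a) with hGdef
  have eF : (fun a => F a ^ 2) = fun a => f a ^ 2 * σ a := by
    funext a; simp only [hFdef, mul_pow]; rw [Real.sq_sqrt (hσ0 a)]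
  have eG : (fun a => G a ^ 2) = fun a => g a ^ 2 * σ a := by
    funext a; simp only [hGdef, mul_pow]; rw [Real.sq_sqrt (hσ0 a)]
  have eD : (fun a => (F a - G a) ^ 2) = fun a => (f a - g a) ^ 2 * σ a := by
    funext a; simp only [hFdef, hGdef, ← sub_mul, mul_pow]; rw [Real.sq_sqrt (hσ0 a)]
  have hsq : AEStronglyMeasurable (fun a => Real.sqrt (σ a)) μ :=
    Real.continuous_sqrt.comp_aestronglyMeasurable hσm
  have hFm : AEStronglyMeasurable F μ := hfm.mul hsq
  have hGm : AEStronglyMeasurable G μ := hgm.mul hsq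
  have hF2 : Integrable (fun a => F a ^ 2) μ := by rw [eF]; exact hf
  have hG2 : Integrable (fun a => G a ^ 2) μ := by rw [eG]; exact hg
  have := L2_triangle hFm hGm hF2 hG2
  rwa [eF, eG, eD] at this

lemma weighted_minkowski_abs {α : Type*} [MeasurableSpace α] {μ : Measure α} {σ f g : α → ℝ}
    (hσ0 : ∀ a, 0 ≤ σ a) (hσm : AEStronglyMeasurable σ μ)
    (hfm : AEStronglyMeasurable f μ) (hgm : AEStronglyMeasurable g μ)
    (hf : Integrable (fun a => f a ^ 2 * σ a) μ) (hg : Integrable (fun a => g a ^ 2 * σ a) μ) :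
    |Real.sqrt (∫ a, f a ^ 2 * σ a ∂μ) - Real.sqrt (∫ a, g a ^ 2 * σ a ∂μ)| ≤
      Real.sqrt (∫ a, (f a - g a) ^ 2 * σ a ∂μ) := by
  rw [abs_sub_le_iff]
  constructor
  · have := weighted_minkowski hσ0 hσm hfm hgm hf hg
    linarith
  · have := weighted_minkowski hσ0 hσm hgm hfm hg hf
    have e : (fun a => (g a - f a) ^ 2 * σ a) = fun a => (f a - g a) ^ 2 * σ a := by
      funext a; ring_nf
    rw [e] at this
    linarith

instance haarProd (m : ℕ) :
    (volume : Measure (EuclideanSpace ℝ (Fin m) × ℝ)).IsAddHaarMeasure :=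
  MeasureTheory.Measure.prod.instIsAddHaarMeasure _ _

section Main
variable {m : ℕ}
local notation "E" => EuclideanSpace ℝ (Fin m)

lemma Mtilde_rw (σ : E → ℝ) (h : E × ℝ → ℝ) (x : E × ℝ) :
    Mtilde σ h x = ∫ y, h (x.1 - y, x.2) * σ y := by
  rw [Mtilde, ← MeasureTheory.integral_sub_left_eq_self
    (fun y => h (y, x.2) * σ (x.1 - y)) volume x.1]
  simp [sub_sub_cancel]

lemma mainlemma (σ : E → ℝ)
    (hσcont : Continuous σ) (hσc : HasCompactSupport σ) (hσ0 : ∀ x, 0 ≤ σ x)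
    (hσ1 : (∫ x, σ x) = 1)
    (v : E × ℝ → ℝ) (K : NNReal) (hv : LipschitzWith K v) :
    LipschitzWith K (fun x => Real.sqrt (Mtilde σ (fun y => (v y) ^ 2) x)) ∧
    (∀ᵐ x : E × ℝ,
      Real.sqrt (tangGradSq (fun z => Real.sqrt (Mtilde σ (fun y => (v y) ^ 2) z)) x +
          vertDerivSq (fun z => Real.sqrt (Mtilde σ (fun y => (v y) ^ 2) z)) x) ≤
        Real.sqrt (Mtilde σ (fun y => tangGradSq v y) x + Mtilde σ (fun y => vertDerivSq v y) x)) := by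
  have vcont : Continuous v := hv.continuous
  have σint : Integrable σ := hσcont.integrable_of_hasCompactSupport hσc
  set w : E × ℝ → ℝ := fun z => Real.sqrt (Mtilde σ (fun y => (v y) ^ 2) z) with hwdef
  -- integrability of continuous functions against σ
  have intσmul : ∀ {A : E → ℝ}, Continuous A → Integrable (fun y => A y * σ y) := by
    intro A hA
    exact (hA.mul hσcont).integrable_of_hasCompactSupport hσc.mul_left
  -- the key distance estimate
  have key : ∀ x z : E × ℝ,
      |w x - w z| ≤ Real.sqrt (∫ y, (v (x.1 - y, x.2) - v (z.1 - y, z.2)) ^ 2 * σ y) := by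
    intro x z
    have cx : Continuous fun y : E => v (x.1 - y, x.2) :=
      vcont.comp ((continuous_const.sub continuous_id).prodMk continuous_const)
    have cz : Continuous fun y : E => v (z.1 - y, z.2) :=
      vcont.comp ((continuous_const.sub continuous_id).prodMk continuous_const)
    have hx2 : Integrable (fun y => (v (x.1 - y, x.2)) ^ 2 * σ y) := intσmul (cx.pow 2)
    have hz2 : Integrable (fun y => (v (z.1 - y, z.2)) ^ 2 * σ y) := intσmul (cz.pow 2)
    have := weighted_minkowski_abs hσ0 hσcont.aestronglyMeasurable
      cx.aestronglyMeasurable cz.aestronglyMeasurable hx2 hz2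
    simp only [hwdef]
    rw [Mtilde_rw σ (fun y => (v y) ^ 2) x, Mtilde_rw σ (fun y => (v y) ^ 2) z]
    exact this
  -- pointwise Lipschitz bound on slices
  have hptw : ∀ (x z : E × ℝ) (y : E),
      |v (x.1 - y, x.2) - v (z.1 - y, z.2)| ≤ (K : ℝ) * dist x z := by
    intro x z y
    have := hv.dist_le_mul (x.1 - y, x.2) (z.1 - y, z.2)
    rw [Real.dist_eq] at this
    refine this.trans ?_
    have : dist ((x.1 - y, x.2) : E × ℝ) (z.1 - y, z.2) = dist x z := by
      simp [Prod.dist_eq, dist_sub_right]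
    rw [this]
  -- the σ-weighted L² bound on increments
  have key2 : ∀ x z : E × ℝ,
      Real.sqrt (∫ y, (v (x.1 - y, x.2) - v (z.1 - y, z.2)) ^ 2 * σ y) ≤ (K : ℝ) * dist x z := by
    intro x z
    have hmono : (∫ y, (v (x.1 - y, x.2) - v (z.1 - y, z.2)) ^ 2 * σ y) ≤
        ((K : ℝ) * dist x z) ^ 2 := by
      have hInt : Integrable (fun y => ((K : ℝ) * dist x z) ^ 2 * σ y) :=
        σint.const_mul _
      have := integral_mono_of_nonneg (g := fun y => ((K : ℝ) * dist x z) ^ 2 * σ y)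
        (Filter.Eventually.of_forall fun y => mul_nonneg (sq_nonneg _) (hσ0 y)) hInt
        (Filter.Eventually.of_forall fun y => by
          have h1 := hptw x z y
          have h2 : (v (x.1 - y, x.2) - v (z.1 - y, z.2)) ^ 2 ≤ ((K : ℝ) * dist x z) ^ 2 := by
            rw [← sq_abs]
            exact pow_le_pow_left₀ (abs_nonneg _) h1 2
          exact mul_le_mul_of_nonneg_right h2 (hσ0 y))
      calc (∫ y, (v (x.1 - y, x.2) - v (z.1 - y, z.2)) ^ 2 * σ y)
          ≤ ∫ y, ((K : ℝ) * dist x z) ^ 2 * σ y := this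
        _ = ((K : ℝ) * dist x z) ^ 2 * ∫ y, σ y := MeasureTheory.integral_const_mul _ _
        _ = ((K : ℝ) * dist x z) ^ 2 := by rw [hσ1, mul_one]
    calc Real.sqrt (∫ y, (v (x.1 - y, x.2) - v (z.1 - y, z.2)) ^ 2 * σ y)
        ≤ Real.sqrt (((K : ℝ) * dist x z) ^ 2) := Real.sqrt_le_sqrt hmono
      _ = (K : ℝ) * dist x z := Real.sqrt_sq (by positivity)
  constructor
  · refine LipschitzWith.of_dist_le_mul fun x z => ?_
    rw [Real.dist_eq]
    exact (key x z).trans (key2 x z)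
  · -- a.e. gradient bound
    have hael : ∀ᵐ p : E × ℝ, DifferentiableAt ℝ v p := hv.ae_differentiableAt
    have hslice : ∀ᵐ t : ℝ, ∀ᵐ z : E, DifferentiableAt ℝ v (z, t) := by
      rw [MeasureTheory.Measure.volume_eq_prod] at hael
      have hswap : ∀ᵐ q : ℝ × E ∂((volume : Measure ℝ).prod (volume : Measure E)),
          DifferentiableAt ℝ v q.swap :=
        (MeasureTheory.Measure.measurePreserving_swap (μ := (volume : Measure ℝ)) (ν := (volume : Measure E))).quasiMeasurePreserving.ae hael
      exact MeasureTheory.Measure.ae_ae_of_ae_prod hswap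
    have hsnd : ∀ᵐ x : E × ℝ, ∀ᵐ z : E, DifferentiableAt ℝ v (z, x.2) := by
      rw [MeasureTheory.Measure.volume_eq_prod]
      exact MeasureTheory.Measure.quasiMeasurePreserving_snd.ae hslice
    filter_upwards [hsnd] with x hx
    by_cases hdw : DifferentiableAt ℝ w x
    case neg =>
      simp only [tangGradSq, vertDerivSq, fderiv_zero_of_not_differentiableAt hdw,
        ContinuousLinearMap.zero_apply]
      simp [Real.sqrt_nonneg]
    case pos =>
    -- directional derivative bound
    have directional : ∀ u : E × ℝ, (fderiv ℝ w x u) ^ 2 ≤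
        ∫ y, (fderiv ℝ v (x.1 - y, x.2) u) ^ 2 * σ y := by
      intro u
      set Iinf : ℝ := ∫ y, (fderiv ℝ v (x.1 - y, x.2) u) ^ 2 * σ y with hIinf
      have hIinf0 : 0 ≤ Iinf :=
        integral_nonneg fun y => mul_nonneg (sq_nonneg _) (hσ0 y)
      -- line derivative machinery
      have hline : ∀ (p : E × ℝ) (hp : DifferentiableAt ℝ v p),
          HasDerivAt (fun t : ℝ => v (p + t • u)) (fderiv ℝ v p u) 0 := by
        intro p hp
        have hl : HasDerivAt (fun t : ℝ => p + t • u) u 0 := by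
          simpa using ((hasDerivAt_id (0 : ℝ)).smul_const u).const_add p
        have hfd : HasFDerivAt v (fderiv ℝ v p) ((fun t : ℝ => p + t • u) 0) := by
          simpa using hp.hasFDerivAt
        exact hfd.comp_hasDerivAt 0 hl
      have hlinew : HasDerivAt (fun t : ℝ => w (x + t • u)) (fderiv ℝ w x u) 0 := by
        have hl : HasDerivAt (fun t : ℝ => x + t • u) u 0 := by
          simpa using ((hasDerivAt_id (0 : ℝ)).smul_const u).const_add x
        have hfd : HasFDerivAt w (fderiv ℝ w x) ((fun t : ℝ => x + t • u) 0) := by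
          simpa using hdw.hasFDerivAt
        exact hfd.comp_hasDerivAt 0 hl
      have hslope : Filter.Tendsto (slope (fun t : ℝ => w (x + t • u)) 0)
          (nhdsWithin 0 {(0:ℝ)}ᶜ) (nhds (fderiv ℝ w x u)) :=
        hasDerivAt_iff_tendsto_slope.1 hlinew
      -- the translation identity
      have hpt : ∀ (t : ℝ) (y : E),
          (((x + t • u).1 - y : E), (x + t • u).2) = ((x.1 - y, x.2) : E × ℝ) + t • u := by
        intro t y
        have h1 : (x + t • u).1 - y = (x.1 - y) + t • u.1 := by
          simp only [Prod.fst_add, Prod.smul_fst]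
          abel
        have h2 : (x + t • u).2 = x.2 + t • u.2 := by
          simp only [Prod.snd_add, Prod.smul_snd]
        rw [Prod.ext_iff]
        constructor
        · simpa using h1
        · simpa using h2
      -- the integrals
      set Φ : ℝ → E → ℝ := fun t y =>
        ((v (((x.1 - y, x.2) : E × ℝ) + t • u) - v (x.1 - y, x.2)) / t) ^ 2 * σ y with hΦ
      -- slope bound
      have hIbound : ∀ t : ℝ, t ≠ 0 →
          |slope (fun s : ℝ => w (x + s • u)) 0 t| ≤ Real.sqrt (∫ y, Φ t y) := by
        intro t ht
        have hsl : slope (fun s : ℝ => w (x + s • u)) 0 t = (w (x + t • u) - w x) / t := by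
          rw [slope_def_field]
          simp
        rw [hsl, abs_div]
        have hkey := key (x + t • u) x
        have hΔ : (fun y : E => (v ((x + t • u).1 - y, (x + t • u).2) - v (x.1 - y, x.2)) ^ 2 * σ y)
            = fun y : E => (v (((x.1 - y, x.2) : E × ℝ) + t • u) - v (x.1 - y, x.2)) ^ 2 * σ y := by
          funext y; rw [hpt t y]
        rw [hΔ] at hkey
        have hInn : 0 ≤ ∫ y, (v (((x.1 - y, x.2) : E × ℝ) + t • u) - v (x.1 - y, x.2)) ^ 2 * σ y :=
          integral_nonneg fun y => mul_nonneg (sq_nonneg _) (hσ0 y)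
        have hconv : (∫ y, Φ t y) =
            (∫ y, (v (((x.1 - y, x.2) : E × ℝ) + t • u) - v (x.1 - y, x.2)) ^ 2 * σ y) / t ^ 2 := by
          rw [← MeasureTheory.integral_div]
          congr 1
          funext y
          rw [hΦ]
          field_simp
        rw [hconv, Real.sqrt_div hInn, Real.sqrt_sq_eq_abs]
        exact (div_le_div_iff_of_pos_right (abs_pos.2 ht)).2 hkey
      -- dominated convergence
      have hlim : Filter.Tendsto (fun t => ∫ y, Φ t y) (nhdsWithin 0 {(0:ℝ)}ᶜ)
          (nhds Iinf) := by
        have hae2 : ∀ᵐ y : E, DifferentiableAt ℝ v (x.1 - y, x.2) := by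
          have hqmp := (MeasureTheory.Measure.measurePreserving_sub_left
            (volume : Measure E) x.1).quasiMeasurePreserving
          exact hqmp.ae (p := fun z : E => DifferentiableAt ℝ v (z, x.2)) hx
        refine MeasureTheory.tendsto_integral_filter_of_dominated_convergence
          (fun y => ((K : ℝ) * ‖u‖) ^ 2 * σ y) ?_ ?_ (σint.const_mul _) ?_
        · filter_upwards with t
          have hc : Continuous fun y : E => (v (((x.1 - y, x.2) : E × ℝ) + t • u)
              - v (x.1 - y, x.2)) / t := by
            have c1 : Continuous fun y : E => ((x.1 - y, x.2) : E × ℝ) :=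
              (continuous_const.sub continuous_id).prodMk continuous_const
            exact (((vcont.comp (c1.add continuous_const)).sub (vcont.comp c1)).div_const t)
          exact ((hc.pow 2).mul hσcont).aestronglyMeasurable
        · filter_upwards [self_mem_nhdsWithin] with t ht
          filter_upwards with y
          have htne : t ≠ 0 := ht
          have hΔle : |v (((x.1 - y, x.2) : E × ℝ) + t • u) - v (x.1 - y, x.2)|
              ≤ (K : ℝ) * (|t| * ‖u‖) := by
            have := hv.dist_le_mul (((x.1 - y, x.2) : E × ℝ) + t • u) (x.1 - y, x.2)
            rw [Real.dist_eq] at this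
            refine this.trans ?_
            have hd : dist (((x.1 - y, x.2) : E × ℝ) + t • u) (x.1 - y, x.2) = |t| * ‖u‖ := by
              rw [dist_eq_norm]
              simp [norm_smul]
            rw [hd]
          have hq : |(v (((x.1 - y, x.2) : E × ℝ) + t • u) - v (x.1 - y, x.2)) / t|
              ≤ (K : ℝ) * ‖u‖ := by
            rw [abs_div]
            rw [div_le_iff₀ (abs_pos.2 htne)]
            calc |v (((x.1 - y, x.2) : E × ℝ) + t • u) - v (x.1 - y, x.2)|
                ≤ (K : ℝ) * (|t| * ‖u‖) := hΔle
              _ = (K : ℝ) * ‖u‖ * |t| := by ring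
          have hnn : 0 ≤ Φ t y := mul_nonneg (sq_nonneg _) (hσ0 y)
          rw [Real.norm_eq_abs, abs_of_nonneg hnn, hΦ]
          refine mul_le_mul_of_nonneg_right ?_ (hσ0 y)
          rw [← sq_abs]
          exact pow_le_pow_left₀ (abs_nonneg _) hq 2
        · filter_upwards [hae2] with y hy
          have hd := hline (x.1 - y, x.2) hy
          have hsl := hasDerivAt_iff_tendsto_slope.1 hd
          have hsl' : Filter.Tendsto
              (fun t : ℝ => (v (((x.1 - y, x.2) : E × ℝ) + t • u) - v (x.1 - y, x.2)) / t)
              (nhdsWithin 0 {(0:ℝ)}ᶜ) (nhds (fderiv ℝ v (x.1 - y, x.2) u)) := by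
            refine hsl.congr' ?_
            filter_upwards with t
            rw [slope_def_field]
            simp
          exact ((hsl'.pow 2).mul_const (σ y))
      -- pass to the limit
      have hsqrtlim : Filter.Tendsto (fun t => Real.sqrt (∫ y, Φ t y))
          (nhdsWithin 0 {(0:ℝ)}ᶜ) (nhds (Real.sqrt Iinf)) :=
        (Real.continuous_sqrt.continuousAt.tendsto).comp hlim
      have habs : |fderiv ℝ w x u| ≤ Real.sqrt Iinf := by
        refine le_of_tendsto_of_tendsto hslope.abs hsqrtlim ?_
        filter_upwards [self_mem_nhdsWithin] with t ht
        exact hIbound t ht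
      calc (fderiv ℝ w x u) ^ 2 = |fderiv ℝ w x u| ^ 2 := (sq_abs _).symm
        _ ≤ (Real.sqrt Iinf) ^ 2 := pow_le_pow_left₀ (abs_nonneg _) habs 2
        _ = Iinf := Real.sq_sqrt hIinf0
    -- combine directions
    have intD : ∀ u : E × ℝ,
        Integrable (fun y => (fderiv ℝ v (x.1 - y, x.2) u) ^ 2 * σ y) := by
      intro u
      have h1 : Measurable fun p : E × ℝ => fderiv ℝ v p u :=
        measurable_fderiv_apply_const ℝ v u
      have h2 : Measurable fun y : E => ((x.1 - y, x.2) : E × ℝ) :=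
        (measurable_const.sub measurable_id).prodMk measurable_const
      have hmeas : AEStronglyMeasurable
          (fun y : E => (fderiv ℝ v (x.1 - y, x.2) u) ^ 2 * σ y) volume :=
        (((h1.comp h2).pow_const 2).mul hσcont.measurable).aestronglyMeasurable
      refine Integrable.mono' (σint.const_mul (((K : ℝ) * ‖u‖) ^ 2)) hmeas ?_
      filter_upwards with y
      have hb : |fderiv ℝ v (x.1 - y, x.2) u| ≤ (K : ℝ) * ‖u‖ := by
        calc |fderiv ℝ v (x.1 - y, x.2) u| = ‖fderiv ℝ v (x.1 - y, x.2) u‖ := rfl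
          _ ≤ ‖fderiv ℝ v (x.1 - y, x.2)‖ * ‖u‖ := ContinuousLinearMap.le_opNorm _ u
          _ ≤ (K : ℝ) * ‖u‖ :=
            mul_le_mul_of_nonneg_right (norm_fderiv_le_of_lipschitz ℝ hv) (norm_nonneg u)
      have hnn : 0 ≤ (fderiv ℝ v (x.1 - y, x.2) u) ^ 2 * σ y :=
        mul_nonneg (sq_nonneg _) (hσ0 y)
      rw [Real.norm_eq_abs, abs_of_nonneg hnn]
      refine mul_le_mul_of_nonneg_right ?_ (hσ0 y)
      rw [← sq_abs]
      exact pow_le_pow_left₀ (abs_nonneg _) hb 2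
    have h1 : tangGradSq w x ≤ ∫ y, tangGradSq v (x.1 - y, x.2) * σ y := by
      have he : (∫ y, tangGradSq v (x.1 - y, x.2) * σ y) = ∑ i, ∫ y,
          (fderiv ℝ v (x.1 - y, x.2) (EuclideanSpace.single i 1, (0:ℝ))) ^ 2 * σ y := by
        rw [← MeasureTheory.integral_finset_sum _ (fun i _ => intD _)]
        congr 1
        funext y
        rw [tangGradSq, Finset.sum_mul]
      rw [tangGradSq, he]
      exact Finset.sum_le_sum fun i _ => directional _
    have h2 : vertDerivSq w x ≤ ∫ y, vertDerivSq v (x.1 - y, x.2) * σ y := by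
      simp only [vertDerivSq]
      exact directional _
    rw [Mtilde_rw σ (fun y => tangGradSq v y) x, Mtilde_rw σ (fun y => vertDerivSq v y) x]
    exact Real.sqrt_le_sqrt (add_le_add h1 h2)

end Main

theorem stmt14 :
    ∃ C : ℝ, 0 < C ∧
      ∀ (n : ℕ), 1 ≤ n →
      ∀ σ : EuclideanSpace ℝ (Fin (n - 1)) → ℝ,
        ContDiff ℝ (⊤ : ℕ∞) σ → HasCompactSupport σ → (∀ x, 0 ≤ σ x) →
        (∫ x, σ x) = 1 → (∀ x y, ‖x‖ = ‖y‖ → σ x = σ y) →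
      ∀ v : EuclideanSpace ℝ (Fin (n - 1)) × ℝ → ℝ,
        (∃ K, LipschitzWith K v) → HasCompactSupport v →
        (∃ K', LipschitzWith K'
          (fun x => Real.sqrt (Mtilde σ (fun y => (v y) ^ 2) x))) ∧
        (∀ᵐ x : EuclideanSpace ℝ (Fin (n - 1)) × ℝ,
          Real.sqrt (tangGradSq (fun z => Real.sqrt (Mtilde σ (fun y => (v y) ^ 2) z)) x +
              vertDerivSq (fun z => Real.sqrt (Mtilde σ (fun y => (v y) ^ 2) z)) x) ≤
            C * Real.sqrt (Mtilde σ (fun y => tangGradSq v y) x +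
              Mtilde σ (fun y => vertDerivSq v y) x)) := by
  refine ⟨1, one_pos, ?_⟩
  intro n hn σ hσs hσc hσ0 hσ1 _ v hK hvs
  obtain ⟨K, hv⟩ := hK
  obtain ⟨h1, h2⟩ := mainlemma σ hσs.continuous hσc hσ0 hσ1 v K hv
  refine ⟨⟨K, h1⟩, ?_⟩
  filter_upwards [h2] with x hx
  rw [one_mul]
  exact hx
end
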